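/- arXiv:2604.09404 — 2 statements merged into one kernel-verified Lean document; each statement's English description precedes it below -/
import Mathlib

section
/- Let V be a simple object of R and ι ∈ End_R(V) with ι∘ι = -1_V; set W := (V, ι), an object of C, so that B(W) = (V, -ι). Then: (a) E(V) ≅ W ⊕ B(W) in C; (b) if the algebra End_R(V) is commutative, then W and B(W) are not isomorphic in C; (c) if End_R(V) is isomorphic as an ℝ-algebra to the quaternions ℍ via an isomorphism sending the quaternion i to ι, and j ∈ End_R(V) denotes the image of the quaternion j, then j is an isomorphism φ : W → B(W) in C satisfying B(φ)∘φ = -1_W, and there exists no isomorphism ψ : W → B(W) in C with B(ψ)∘ψ = 1_W. -/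
set_option linter.unusedSectionVars false

open CategoryTheory CategoryTheory.Limits

universe v u

variable (R : Type u) [Category.{v} R] [Abelian R] [CategoryTheory.Linear ℝ R]

/-- Objects of the category `C`: pairs `(V, ι)` with `ι ∘ ι = -1`. -/
structure CObj : Type max u v where
  V : R
  ι : V ⟶ V
  hι : ι ≫ ι = -𝟙 V

variable {R}

instance : Category.{v} (CObj R) where
  Hom W₁ W₂ := { φ : W₁.V ⟶ W₂.V // W₁.ι ≫ φ = φ ≫ W₂.ι }
  id W := ⟨𝟙 W.V, by simp⟩
  comp f g := ⟨f.1 ≫ g.1, by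
    rw [← Category.assoc, f.2, Category.assoc, g.2, Category.assoc]⟩
  id_comp f := Subtype.ext (Category.id_comp f.1)
  comp_id f := Subtype.ext (Category.comp_id f.1)
  assoc f g h := Subtype.ext (Category.assoc f.1 g.1 h.1)

@[ext]
lemma CObj.hom_ext {W₁ W₂ : CObj R} {f g : W₁ ⟶ W₂} (h : f.1 = g.1) : f = g :=
  Subtype.ext h

@[simp]
lemma CObj.id_coe (W : CObj R) : (𝟙 W : W ⟶ W).1 = 𝟙 W.V := rfl

@[simp]
lemma CObj.comp_coe {W₁ W₂ W₃ : CObj R} (f : W₁ ⟶ W₂) (g : W₂ ⟶ W₃) :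
    (f ≫ g).1 = f.1 ≫ g.1 := rfl

instance (W₁ W₂ : CObj R) : Zero (W₁ ⟶ W₂) := ⟨⟨0, by simp⟩⟩

instance (W₁ W₂ : CObj R) : Add (W₁ ⟶ W₂) :=
  ⟨fun f g => ⟨f.1 + g.1, by rw [Preadditive.comp_add, Preadditive.add_comp, f.2, g.2]⟩⟩

instance (W₁ W₂ : CObj R) : Neg (W₁ ⟶ W₂) :=
  ⟨fun f => ⟨-f.1, by rw [Preadditive.comp_neg, Preadditive.neg_comp, f.2]⟩⟩

instance (W₁ W₂ : CObj R) : Sub (W₁ ⟶ W₂) :=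
  ⟨fun f g => ⟨f.1 - g.1, by rw [Preadditive.comp_sub, Preadditive.sub_comp, f.2, g.2]⟩⟩

instance (W₁ W₂ : CObj R) : SMul ℕ (W₁ ⟶ W₂) :=
  ⟨fun n f => ⟨n • f.1, by rw [Linear.comp_smul, Linear.smul_comp, f.2]⟩⟩

instance (W₁ W₂ : CObj R) : SMul ℤ (W₁ ⟶ W₂) :=
  ⟨fun n f => ⟨n • f.1, by rw [Linear.comp_smul, Linear.smul_comp, f.2]⟩⟩

@[simp] lemma CObj.zero_coe (W₁ W₂ : CObj R) : (0 : W₁ ⟶ W₂).1 = 0 := rfl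
@[simp] lemma CObj.add_coe {W₁ W₂ : CObj R} (f g : W₁ ⟶ W₂) : (f + g).1 = f.1 + g.1 := rfl
@[simp] lemma CObj.neg_coe {W₁ W₂ : CObj R} (f : W₁ ⟶ W₂) : (-f).1 = -f.1 := rfl

instance (W₁ W₂ : CObj R) : AddCommGroup (W₁ ⟶ W₂) :=
  Function.Injective.addCommGroup (fun f : W₁ ⟶ W₂ => f.1) Subtype.val_injective
    rfl (fun _ _ => rfl) (fun _ => rfl) (fun _ _ => rfl) (fun _ _ => rfl) (fun _ _ => rfl)

instance : Preadditive (CObj R) where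
  add_comp P Q S f f' g := by apply Subtype.ext; exact Preadditive.add_comp _ _ _ f.1 f'.1 g.1
  comp_add P Q S f g g' := by apply Subtype.ext; exact Preadditive.comp_add _ _ _ f.1 g.1 g'.1

variable (R)

/-- The conjugation functor `B : C → C`. -/
def Bfunctor : CObj R ⥤ CObj R where
  obj W := ⟨W.V, -W.ι, by simp [W.hι]⟩
  map f := ⟨f.1, by simp [f.2]⟩
  map_id _ := rfl
  map_comp _ _ := rfl

/-- The forgetful functor `F : C → R`. -/
def Ffunctor : CObj R ⥤ R where
  obj W := W.V
  map f := f.1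
  map_id _ := rfl
  map_comp _ _ := rfl

/-- The complexification functor `E : R → C`. -/
noncomputable def Efunctor : R ⥤ CObj R where
  obj V :=
    { V := V ⊞ V
      ι := -(biprod.snd ≫ biprod.inl) + biprod.fst ≫ biprod.inr
      hι := by ext <;> simp }
  map φ := ⟨biprod.map φ φ, by ext <;> simp⟩
  map_id V := Subtype.ext (by ext <;> simp)
  map_comp f g := Subtype.ext (by ext <;> simp)

variable {R}

/-- The biproduct `(V₁ ⊕ V₂, ι₁ ⊕ ι₂)` of two objects of `C`. -/
noncomputable def csum (W₁ W₂ : CObj R) : CObj R where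
  V := W₁.V ⊞ W₂.V
  ι := biprod.map W₁.ι W₂.ι
  hι := by ext <;> simp [W₁.hι, W₂.hι]

/-- Multiplication by `i` as a morphism in `C`. -/
def iMor (W : CObj R) : W ⟶ W := ⟨W.ι, rfl⟩

/-!
A morphism `W ⟶ B W` is an endomorphism `f` of `V` with `ι f = -f ι`. If `f` also commutes with
`ι`, then `2 f ι = 0`, hence `f = 0`. This excludes `W ≅ B W` when `End V` is commutative, and
also any `ψ : W ⟶ B W` with `ψ² = 1`: by Schur's lemma `End V` is a division ring, so `ψ = ±1`
commutes with `ι`. In the quaternionic case `j` anticommutes with `ι = i` and has inverse `-j`.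
-/

section Anticommuting

variable {V : R} {ι f : V ⟶ V}

lemma eq_zero_of_anticomm_of_comm (hι : ι ≫ ι = -𝟙 V) (hanti : ι ≫ f = -(f ≫ ι))
    (hcomm : ι ≫ f = f ≫ ι) : f = 0 := by
  have hfι : f ≫ ι = 0 := by
    have h2 : (2 : ℝ) • (f ≫ ι) = 0 := by
      rw [two_smul, ← sub_neg_eq_add, ← hanti, hcomm, sub_self]
    exact (smul_eq_zero.mp h2).resolve_left two_ne_zero
  calc f = -((f ≫ ι) ≫ ι) := by
        rw [Category.assoc, hι, Preadditive.comp_neg, Category.comp_id, neg_neg]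
    _ = 0 := by rw [hfι, zero_comp, neg_zero]

lemma comp_self_ne_id_of_anticomm [Simple V] (hι : ι ≫ ι = -𝟙 V) (hanti : ι ≫ f = -(f ≫ ι)) :
    f ≫ f ≠ 𝟙 V := by
  intro hff
  have hsign := (mul_self_eq_one_iff (R := End V) (a := f)).mp hff
  have hcomm : ι ≫ f = f ≫ ι := by
    rcases hsign with rfl | rfl
    exacts [(Commute.one_left (M := End V) ι).eq, (Commute.neg_one_left (R := End V) ι).eq]
  have hf := eq_zero_of_anticomm_of_comm hι hanti hcomm
  rw [hf, zero_comp] at hff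
  exact id_nonzero V hff.symm

end Anticommuting

namespace CObj

variable {W W₁ W₂ : CObj R}

lemma isIso_of_isIso_val (φ : W₁ ⟶ W₂) [IsIso φ.1] : IsIso φ :=
  ⟨⟨inv φ.1, by rw [IsIso.eq_inv_comp, ← Category.assoc, ← φ.2, Category.assoc,
      IsIso.hom_inv_id, Category.comp_id]⟩,
    CObj.hom_ext (IsIso.hom_inv_id φ.1), CObj.hom_ext (IsIso.inv_hom_id φ.1)⟩

lemma ι_comp_conj_hom (φ : W ⟶ (Bfunctor R).obj W) : W.ι ≫ φ.1 = -(φ.1 ≫ W.ι) :=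
  φ.2.trans (Preadditive.comp_neg _ _)

/-- On `V ⊕ V` with `ι(v₁, v₂) = (-v₂, v₁)`, the map `(v₁, v₂) ↦ (v₁ + ι v₂, v₁ - ι v₂)` splits
off the `+ι` and `-ι` parts; its inverse is `(w₁, w₂) ↦ ½ (w₁ + w₂, -ι w₁ + ι w₂)`. -/
noncomputable def efunctorObjIsoCsum (W : CObj R) :
    (Efunctor R).obj W.V ≅ csum W ((Bfunctor R).obj W) where
  hom := ⟨(biprod.lift (biprod.fst + biprod.snd ≫ W.ι) (biprod.fst - biprod.snd ≫ W.ι) :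
      W.V ⊞ W.V ⟶ W.V ⊞ W.V), by
    dsimp only [Efunctor, csum, Bfunctor]
    ext <;> simp [W.hι]⟩
  inv := ⟨((1 / 2 : ℝ) • biprod.lift (biprod.fst + biprod.snd)
      (-(biprod.fst ≫ W.ι) + biprod.snd ≫ W.ι) : W.V ⊞ W.V ⟶ W.V ⊞ W.V), by
    dsimp only [Efunctor, csum, Bfunctor]
    ext <;> simp [W.hι]⟩
  hom_inv_id := by
    ext1
    dsimp only [Efunctor, csum, Bfunctor, CObj.comp_coe, CObj.id_coe]
    ext <;> simp [W.hι] <;> module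
  inv_hom_id := by
    ext1
    dsimp only [Efunctor, csum, Bfunctor, CObj.comp_coe, CObj.id_coe]
    ext <;> simp [W.hι] <;> module

lemma not_nonempty_iso_conj [Simple W.V] (hcomm : ∀ f g : W.V ⟶ W.V, f ≫ g = g ≫ f) :
    ¬Nonempty (W ≅ (Bfunctor R).obj W) := by
  rintro ⟨e⟩
  have he : e.hom.1 = 0 :=
    eq_zero_of_anticomm_of_comm W.hι (ι_comp_conj_hom e.hom) (hcomm _ _)
  apply id_nonzero W.V
  calc 𝟙 W.V = e.hom.1 ≫ e.inv.1 := (congrArg Subtype.val e.hom_inv_id).symm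
    _ = 0 := by rw [he, zero_comp]

lemma exists_isIso_conj_hom_of_anticomm {j : W.V ⟶ W.V} (hanti : W.ι ≫ j = -(j ≫ W.ι))
    (hjj : j ≫ j = -𝟙 W.V) :
    ∃ φ : W ⟶ (Bfunctor R).obj W, φ.1 = j ∧ IsIso φ ∧ φ.1 ≫ φ.1 = -𝟙 W.V := by
  let φ : W ⟶ (Bfunctor R).obj W := ⟨j, hanti.trans (Preadditive.comp_neg _ _).symm⟩
  have : IsIso φ.1 := (⟨-j, by rw [Preadditive.comp_neg, hjj, neg_neg],
    by rw [Preadditive.neg_comp, hjj, neg_neg]⟩ : IsIso j)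
  exact ⟨φ, rfl, isIso_of_isIso_val φ, hjj⟩

end CObj

open scoped TensorProduct Quaternion

variable [EssentiallySmall.{v} R]

section QuaternionAlgebra

variable {A : Type*} [Ring A] [Algebra ℝ A] (e : ℍ[ℝ] ≃ₐ[ℝ] A)

lemma AlgEquiv.quaternion_j_mul_i :
    e ⟨0, 0, 1, 0⟩ * e ⟨0, 1, 0, 0⟩ = -(e ⟨0, 1, 0, 0⟩ * e ⟨0, 0, 1, 0⟩) := by
  have hji : ((⟨0, 0, 1, 0⟩ : ℍ[ℝ]) * ⟨0, 1, 0, 0⟩) =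
      -((⟨0, 1, 0, 0⟩ : ℍ[ℝ]) * ⟨0, 0, 1, 0⟩) := by
    ext <;> simp
  exact (map_mul e _ _).symm.trans ((congrArg e hji).trans
    ((map_neg e _).trans (congrArg Neg.neg (map_mul e _ _))))

lemma AlgEquiv.quaternion_j_mul_j : e ⟨0, 0, 1, 0⟩ * e ⟨0, 0, 1, 0⟩ = -1 := by
  have hjj : ((⟨0, 0, 1, 0⟩ : ℍ[ℝ]) * ⟨0, 0, 1, 0⟩) = -1 := by ext <;> simp
  exact (map_mul e _ _).symm.trans
    ((congrArg e hjj).trans ((map_neg e 1).trans (congrArg Neg.neg (map_one e))))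

end QuaternionAlgebra

theorem statement8_general
    (V : R) [Simple V]
    (ι : V ⟶ V) (hι : ι ≫ ι = -𝟙 V) :
    Nonempty ((Efunctor R).obj V ≅
        csum (CObj.mk V ι hι) ((Bfunctor R).obj (CObj.mk V ι hι))) ∧
    ((∀ f g : V ⟶ V, f ≫ g = g ≫ f) →
        ¬Nonempty ((CObj.mk V ι hι) ≅ (Bfunctor R).obj (CObj.mk V ι hι))) ∧
    (∀ e : ℍ[ℝ] ≃ₐ[ℝ] CategoryTheory.End V, e ⟨0, 1, 0, 0⟩ = ι →
      (∃ φ : (CObj.mk V ι hι) ⟶ (Bfunctor R).obj (CObj.mk V ι hι),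
          φ.1 = e ⟨0, 0, 1, 0⟩ ∧ IsIso φ ∧ φ.1 ≫ φ.1 = -𝟙 V) ∧
      ¬∃ ψ : (CObj.mk V ι hι) ⟶ (Bfunctor R).obj (CObj.mk V ι hι),
          IsIso ψ ∧ ψ.1 ≫ ψ.1 = 𝟙 V) := by
  refine ⟨⟨CObj.efunctorObjIsoCsum ⟨V, ι, hι⟩⟩, CObj.not_nonempty_iso_conj (W := ⟨V, ι, hι⟩),
    fun e he => ⟨?_, ?_⟩⟩
  · -- In `End V` the product is reversed composition: `f * g = g ≫ f`.
    have hanti : ι ≫ e ⟨0, 0, 1, 0⟩ = -(e ⟨0, 0, 1, 0⟩ ≫ ι) := he ▸ e.quaternion_j_mul_i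
    exact CObj.exists_isIso_conj_hom_of_anticomm hanti e.quaternion_j_mul_j
  · rintro ⟨ψ, -, hψ⟩
    exact comp_self_ne_id_of_anticomm hι (CObj.ι_comp_conj_hom ψ) hψ

theorem statement8
    (hfin : ∀ V : R, Simple V → FiniteDimensional ℝ (V ⟶ V)) (V : R) [Simple V]
    (ι : V ⟶ V) (hι : ι ≫ ι = -𝟙 V) :
    Nonempty ((Efunctor R).obj V ≅
        csum (CObj.mk V ι hι) ((Bfunctor R).obj (CObj.mk V ι hι))) ∧
    ((∀ f g : V ⟶ V, f ≫ g = g ≫ f) →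
        ¬Nonempty ((CObj.mk V ι hι) ≅ (Bfunctor R).obj (CObj.mk V ι hι))) ∧
    (∀ e : ℍ[ℝ] ≃ₐ[ℝ] CategoryTheory.End V, e ⟨0, 1, 0, 0⟩ = ι →
      (∃ φ : (CObj.mk V ι hι) ⟶ (Bfunctor R).obj (CObj.mk V ι hι),
          φ.1 = e ⟨0, 0, 1, 0⟩ ∧ IsIso φ ∧ φ.1 ≫ φ.1 = -𝟙 V) ∧
      ¬∃ ψ : (CObj.mk V ι hι) ⟶ (Bfunctor R).obj (CObj.mk V ι hι),
          IsIso ψ ∧ ψ.1 ≫ ψ.1 = 𝟙 V) :=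
  statement8_general V ι hι
end

section
/- For every simple object W of C, exactly one of the following three alternatives holds: (+) there exists a simple object V of R with F(W) ≅ V ⊕ V; (∘) F(W) is a simple object of R and W is not isomorphic to B(W) in C; (−) F(W) is a simple object of R and W is isomorphic to B(W) in C. -/
set_option linter.unusedSectionVars false

open CategoryTheory CategoryTheory.Limits

universe v u

variable (R : Type u) [Category.{v} R] [Abelian R] [CategoryTheory.Linear ℝ R]

variable {R}

variable (R)

variable {R}

open scoped TensorProduct Quaternion

variable [EssentiallySmall.{v} R]

/-! `ι` acts on the subobject lattice of `F(W)` by an involutive order automorphism, and since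
`W` is simple its only fixed points are `⊥` and `⊤`. Hence for every proper nonzero subobject `U`
both `U ⊔ ιU` and `U ⊓ ιU` are fixed, so `F(W) = U ⊕ ιU ≅ U ⊕ U`. Applying the same to a nonzero
`T ≤ U` gives `F(W) = T ⊕ ιT` with `ιT` disjoint from `U`, which forces `T = U`; so `U` is simple.
Conversely `V ⊕ V` is never simple, so `(+)` holds exactly when `F(W)` is not simple, and `(∘)`,
`(−)` are then told apart by whether `W ≅ B(W)`. -/

lemma OrderIso.isCompl_apply_of_involutive {α : Type*} [Lattice α] [BoundedOrder α]
    (σ : α ≃o α) (hσ : ∀ a, σ (σ a) = a) (hfix : ∀ a, σ a = a → a = ⊥ ∨ a = ⊤) {a : α}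
    (hbot : a ≠ ⊥) (htop : a ≠ ⊤) : IsCompl a (σ a) := by
  refine ⟨disjoint_iff.2 ?_, codisjoint_iff.2 ?_⟩
  · refine (hfix _ (by rw [map_inf, hσ, inf_comm])).resolve_right fun h => htop ?_
    exact top_le_iff.1 (h ▸ inf_le_left)
  · refine (hfix _ (by rw [map_sup, hσ, sup_comm])).resolve_left fun h => hbot ?_
    exact le_bot_iff.1 (h ▸ le_sup_left)

namespace CategoryTheory.Subobject

lemma map_obj_eq_mk {𝒜 : Type*} [Category 𝒜] {X Y : 𝒜} (f : X ⟶ Y) [Mono f] (P : Subobject X) :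
    (map f).obj P = mk (P.arrow ≫ f) := by
  conv_lhs => rw [← mk_arrow P]
  exact map_mk _ _

lemma eq_bot_iff_arrow_eq_zero {𝒜 : Type*} [Category 𝒜] [HasZeroObject 𝒜] [HasZeroMorphisms 𝒜]
    {X : 𝒜} (P : Subobject X) : P = ⊥ ↔ P.arrow = 0 := by
  conv_lhs => rw [← mk_arrow P]
  exact mk_eq_bot_iff_zero

lemma map_hom_map_hom_obj_of_sq_eq_neg_id {𝒜 : Type*} [Category 𝒜] [Preadditive 𝒜] {X : 𝒜}
    (J : X ≅ X) (hJ : J.hom ≫ J.hom = -𝟙 X) (P : Subobject X) :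
    (map J.hom).obj ((map J.hom).obj P) = P := by
  rw [← map_comp, map_obj_eq_mk]
  conv_rhs => rw [← mk_arrow P]
  exact mk_eq_mk_of_comm _ _ ⟨-𝟙 _, -𝟙 _, by simp, by simp⟩ (by simp [hJ])

section Abelian

variable {𝒜 : Type*} [Category 𝒜] [Abelian 𝒜] {X : 𝒜}

lemma mono_biprod_desc_arrow_of_disjoint {A B : Subobject X} (h : Disjoint A B) :
    Mono (biprod.desc A.arrow B.arrow) := by
  refine Preadditive.mono_of_cancel_zero _ fun g hg => ?_
  rw [biprod.desc_eq, Preadditive.comp_add, ← Category.assoc, ← Category.assoc] at hg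
  have hA : (A ⊓ B).Factors ((g ≫ biprod.fst) ≫ A.arrow) :=
    (inf_factors _).2 ⟨factors_comp_arrow _,
      factors_left_of_factors_add _ _ (hg ▸ factors_zero) (factors_comp_arrow _)⟩
  rw [disjoint_iff.1 h, bot_factors_iff_zero] at hA
  rw [hA, zero_add] at hg
  apply biprod.hom_ext
  · simpa using zero_of_comp_mono _ hA
  · simpa using zero_of_comp_mono _ hg

lemma epi_biprod_desc_arrow_of_codisjoint {A B : Subobject X} (h : Codisjoint A B) :
    Epi (biprod.desc A.arrow B.arrow) := by
  refine Preadditive.epi_of_cancel_zero _ fun c hc => ?_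
  have hA : A ≤ kernelSubobject c := le_kernelSubobject _ _ (by simpa using biprod.inl ≫= hc)
  have hB : B ≤ kernelSubobject c := le_kernelSubobject _ _ (by simpa using biprod.inr ≫= hc)
  have : IsIso (kernelSubobject c).arrow :=
    (isIso_arrow_iff_eq_top _).2 (top_le_iff.1 (h.eq_top ▸ sup_le hA hB))
  exact zero_of_epi_comp _ (kernelSubobject_arrow_comp c)

lemma isIso_biprod_desc_arrow_of_isCompl {A B : Subobject X} (h : IsCompl A B) :
    IsIso (biprod.desc A.arrow B.arrow) :=
  have := mono_biprod_desc_arrow_of_disjoint h.disjoint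
  have := epi_biprod_desc_arrow_of_codisjoint h.codisjoint
  isIso_of_mono_of_epi _

/-- A weak form of the modular law. -/
lemma le_of_codisjoint_of_disjoint {T U S : Subobject X} (hTU : T ≤ U) (hTS : Codisjoint T S)
    (hUS : Disjoint U S) : U ≤ T := by
  have := isIso_biprod_desc_arrow_of_isCompl ⟨hUS.mono_left hTU, hTS⟩
  obtain ⟨a, b, hab⟩ : ∃ (a : (U : 𝒜) ⟶ T) (b : (U : 𝒜) ⟶ S),
      a ≫ T.arrow + b ≫ S.arrow = U.arrow :=
    ⟨U.arrow ≫ inv (biprod.desc T.arrow S.arrow) ≫ biprod.fst,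
      U.arrow ≫ inv (biprod.desc T.arrow S.arrow) ≫ biprod.snd, by
        simp only [Category.assoc, ← Preadditive.comp_add, ← biprod.desc_eq, IsIso.inv_hom_id,
          Category.comp_id]⟩
  have hb : (U ⊓ S).Factors (b ≫ S.arrow) :=
    (inf_factors _).2 ⟨factors_right_of_factors_add _ _ (hab ▸ factors_self U)
      (factors_of_le _ hTU (factors_comp_arrow a)), factors_comp_arrow _⟩
  rw [disjoint_iff.1 hUS, bot_factors_iff_zero] at hb
  exact le_of_comm a (by rw [← hab, hb, add_zero])

theorem exists_simple_biprod_iso_of_sq_eq_neg_id (J : X ≅ X) (hJ : J.hom ≫ J.hom = -𝟙 X)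
    (hstable : ∀ P : Subobject X, (map J.hom).obj P = P → P = ⊥ ∨ P = ⊤)
    (hX₀ : ¬IsZero X) (hX : ¬Simple X) : ∃ V : 𝒜, Simple V ∧ Nonempty (X ≅ V ⊞ V) := by
  have : Nontrivial (Subobject X) := nontrivial_of_not_isZero hX₀
  obtain ⟨U, hU_bot, hU_top⟩ : ∃ U : Subobject X, U ≠ ⊥ ∧ U ≠ ⊤ := by
    by_contra! h
    have : IsSimpleOrder (Subobject X) := ⟨fun U => or_iff_not_imp_left.2 (h U)⟩
    exact hX (simple_of_isSimpleOrder_subobject X)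
  let σ := mapIsoToOrderIso J
  have hσ : ∀ P, σ (σ P) = P := map_hom_map_hom_obj_of_sq_eq_neg_id J hJ
  have hcompl : ∀ P, P ≠ ⊥ → P ≠ ⊤ → IsCompl P (σ P) := fun _ =>
    σ.isCompl_apply_of_involutive hσ hstable
  have hU : IsCompl U (σ U) := hcompl U hU_bot hU_top
  have hUatom : IsAtom U := ⟨hU_bot, fun T hTU => by
    by_contra hT_bot
    have hT : IsCompl T (σ T) := hcompl T hT_bot (hTU.trans_le le_top).ne
    exact hTU.not_ge (le_of_codisjoint_of_disjoint hTU.le hT.codisjoint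
      (hU.disjoint.mono_right (σ.monotone hTU.le)))⟩
  have := isIso_biprod_desc_arrow_of_isCompl hU
  exact ⟨U, (subobject_simple_iff_isAtom U).2 hUatom,
    ⟨(asIso (biprod.desc U.arrow (σ U).arrow)).symm ≪≫
      biprod.mapIso (Iso.refl _) (isoOfEq _ _ (map_obj_eq_mk _ U) ≪≫ underlyingIso _)⟩⟩

end Abelian

end CategoryTheory.Subobject

lemma CategoryTheory.not_simple_biprod_self {𝒜 : Type*} [Category 𝒜] [Preadditive 𝒜]
    [HasBinaryBiproducts 𝒜] (V : 𝒜) [Simple V] : ¬Simple (V ⊞ V) := fun _ =>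
  ((indecomposable_of_simple (V ⊞ V)).2 V V (Iso.refl _)).elim (Simple.not_isZero V)
    (Simple.not_isZero V)

namespace CObj

variable {𝒞 : Type*} [Category 𝒞] [Abelian 𝒞] [Linear ℝ 𝒞]

instance : (Ffunctor 𝒞).Faithful where
  map_injective h := Subtype.ext h

def ιIso (W : CObj 𝒞) : W.V ≅ W.V where
  hom := W.ι
  inv := -W.ι
  hom_inv_id := by rw [Preadditive.comp_neg, W.hι, neg_neg]
  inv_hom_id := by rw [Preadditive.neg_comp, W.hι, neg_neg]

lemma not_isZero_V (W : CObj 𝒞) [Simple W] : ¬IsZero W.V := fun h =>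
  id_nonzero W ((Ffunctor 𝒞).map_injective (h.eq_of_src _ _))

/-- An `ι`-stable subobject `m` of `W.V` underlies a subobject of `W` in `C`. -/
lemma eq_zero_or_isIso_of_comm (W : CObj 𝒞) [Simple W] {Y : 𝒞} (m : Y ⟶ W.V) [Mono m]
    (j : Y ⟶ Y) (hj : j ≫ m = m ≫ W.ι) : m = 0 ∨ IsIso m := by
  have hjj : j ≫ j = -𝟙 Y := by
    rw [← cancel_mono m, Category.assoc, hj, ← Category.assoc, hj, Category.assoc, W.hι]
    simp
  let f : (⟨Y, j, hjj⟩ : CObj 𝒞) ⟶ W := ⟨m, hj⟩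
  have : Mono f := (Ffunctor 𝒞).mono_of_mono_map ‹Mono m›
  by_cases hf : f = 0
  · exact Or.inl (congrArg Subtype.val hf)
  · have := (Simple.mono_isIso_iff_nonzero f).2 hf
    exact Or.inr ((Ffunctor 𝒞).map_isIso f)

lemma eq_bot_or_eq_top_of_map_ι (W : CObj 𝒞) [Simple W] (P : Subobject W.V)
    (hP : (Subobject.map W.ιIso.hom).obj P = P) : P = ⊥ ∨ P = ⊤ := by
  have hfac : P.Factors (P.arrow ≫ W.ι) := by
    have := Subobject.mk_factors_self (P.arrow ≫ W.ιIso.hom)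
    rwa [← Subobject.map_obj_eq_mk, hP] at this
  rw [Subobject.eq_bot_iff_arrow_eq_zero, ← Subobject.isIso_arrow_iff_eq_top]
  exact eq_zero_or_isIso_of_comm W _ _ (P.factorThru_arrow _ hfac)

theorem exists_simple_biprod_iso_of_not_simple (W : CObj 𝒞) [Simple W] (h : ¬Simple W.V) :
    ∃ V : 𝒞, Simple V ∧ Nonempty (W.V ≅ V ⊞ V) :=
  Subobject.exists_simple_biprod_iso_of_sq_eq_neg_id W.ιIso W.hι (eq_bot_or_eq_top_of_map_ι W)
    W.not_isZero_V h

end CObj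

theorem statement11_general (W : CObj R) [Simple W] :
    ((∃ V : R, Simple V ∧ Nonempty ((Ffunctor R).obj W ≅ V ⊞ V)) ∧
      ¬(Simple ((Ffunctor R).obj W) ∧ ¬Nonempty (W ≅ (Bfunctor R).obj W)) ∧
      ¬(Simple ((Ffunctor R).obj W) ∧ Nonempty (W ≅ (Bfunctor R).obj W))) ∨
    (¬(∃ V : R, Simple V ∧ Nonempty ((Ffunctor R).obj W ≅ V ⊞ V)) ∧
      (Simple ((Ffunctor R).obj W) ∧ ¬Nonempty (W ≅ (Bfunctor R).obj W)) ∧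
      ¬(Simple ((Ffunctor R).obj W) ∧ Nonempty (W ≅ (Bfunctor R).obj W))) ∨
    (¬(∃ V : R, Simple V ∧ Nonempty ((Ffunctor R).obj W ≅ V ⊞ V)) ∧
      ¬(Simple ((Ffunctor R).obj W) ∧ ¬Nonempty (W ≅ (Bfunctor R).obj W)) ∧
      (Simple ((Ffunctor R).obj W) ∧ Nonempty (W ≅ (Bfunctor R).obj W))) := by
  have hsplit : (∃ V : R, Simple V ∧ Nonempty ((Ffunctor R).obj W ≅ V ⊞ V)) ↔
      ¬Simple ((Ffunctor R).obj W) :=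
    ⟨fun ⟨V, _, ⟨e⟩⟩ _ => not_simple_biprod_self V (Simple.of_iso e.symm),
      W.exists_simple_biprod_iso_of_not_simple⟩
  rw [hsplit]
  tauto

theorem statement11
    (hfin : ∀ V : R, Simple V → FiniteDimensional ℝ (V ⟶ V)) (W : CObj R) [Simple W] :
    ((∃ V : R, Simple V ∧ Nonempty ((Ffunctor R).obj W ≅ V ⊞ V)) ∧
      ¬(Simple ((Ffunctor R).obj W) ∧ ¬Nonempty (W ≅ (Bfunctor R).obj W)) ∧
      ¬(Simple ((Ffunctor R).obj W) ∧ Nonempty (W ≅ (Bfunctor R).obj W))) ∨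
    (¬(∃ V : R, Simple V ∧ Nonempty ((Ffunctor R).obj W ≅ V ⊞ V)) ∧
      (Simple ((Ffunctor R).obj W) ∧ ¬Nonempty (W ≅ (Bfunctor R).obj W)) ∧
      ¬(Simple ((Ffunctor R).obj W) ∧ Nonempty (W ≅ (Bfunctor R).obj W))) ∨
    (¬(∃ V : R, Simple V ∧ Nonempty ((Ffunctor R).obj W ≅ V ⊞ V)) ∧
      ¬(Simple ((Ffunctor R).obj W) ∧ ¬Nonempty (W ≅ (Bfunctor R).obj W)) ∧
      (Simple ((Ffunctor R).obj W) ∧ Nonempty (W ≅ (Bfunctor R).obj W))) :=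
  statement11_general W
end
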